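/- arXiv:math/0305039 — 3 statements merged into one kernel-verified Lean document; each statement's English description precedes it below -/
import Mathlib

section
/- In the embedded HMM update, the probability of starting at sequence x (drawn from π), choosing offsets J_t, generating the given candidate pools via kernels R_t and their reversals R̃_t, and then selecting sequence x' with probability proportional to π(x')/∏_t ρ_t(x'_t) over pool sequences, equals (1/K)^n · [π(x)·π(x') / ∏_t ρ_t(x_t)·ρ_t(x'_t)] · ∏_t [ρ_t(x_t^[−K+J_t+1]) · ∏_{j=−K+J_t+1}^{J_t−1} R_t(x_t^[j+1] | x_t^[j])] / Z, where Z is the normalizing constant over sequences in the pools. -/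
/-!
The pool at time `t` is a chain `x_t^[a], …, x_t^[b]` through `x_t^[0] = x_t`: forward steps
via `R_t` to the right of `0`, reversed steps via `R̃_t` to the left. Rewriting every reversed
step `R̃_t(x^[j] | x^[j+1]) = ρ_t(x^[j]) R_t(x^[j+1] | x^[j]) / ρ_t(x^[j+1])`, the `ρ_t`-factors
telescope to `ρ_t(x^[a]) / ρ_t(x_t)`, which turns the generation probability of the pool into a
forward chain started from its leftmost element. The rest is rearranging factors.
-/

open Finset

theorem Int.prod_Ico_div_add_one {G₀ : Type*} [CommGroupWithZero G₀] (f : ℤ → G₀)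
    (hf : ∀ j, f j ≠ 0) {a b : ℤ} (hab : a ≤ b) :
    ∏ j ∈ Ico a b, f j / f (j + 1) = f a / f b := by
  induction b, hab using Int.leInduction with
  | base => simp [div_self (hf a)]
  | succ b hab ih =>
    rw [Ico_add_one_right_eq_Icc, ← prod_Ico_mul_eq_prod_Icc hab, ih,
      div_mul_div_cancel₀ (hf b)]

theorem prod_forward_mul_prod_reversal {X 𝕜 : Type*} [Field 𝕜] (g : ℤ → X) (R : X → X → 𝕜)
    (ρ : X → 𝕜) (hρ : ∀ s, ρ s ≠ 0) (Rrev : X → X → 𝕜)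
    (hRrev : ∀ s' s, Rrev s' s = ρ s * R s s' / ρ s') {a b : ℤ} (ha : a ≤ 0) (hb : 0 ≤ b) :
    (∏ j ∈ Icc 1 b, R (g (j - 1)) (g j)) * ∏ j ∈ Icc a (-1), Rrev (g (j + 1)) (g j)
      = ρ (g a) / ρ (g 0) * ∏ j ∈ Icc a (b - 1), R (g j) (g (j + 1)) := by
  have forward : ∏ j ∈ Icc 1 b, R (g (j - 1)) (g j) = ∏ j ∈ Ico 0 b, R (g j) (g (j + 1)) := by
    have shift := prod_Ico_add' (fun j => R (g (j - 1)) (g j)) 0 b 1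
    simp only [zero_add, Ico_add_one_right_eq_Icc, add_sub_cancel_right] at shift
    exact shift.symm
  have reversed : ∏ j ∈ Icc a (-1), Rrev (g (j + 1)) (g j)
      = ρ (g a) / ρ (g 0) * ∏ j ∈ Ico a 0, R (g j) (g (j + 1)) := by
    rw [← Int.prod_Ico_div_add_one (fun j => ρ (g j)) (fun j => hρ (g j)) ha,
      ← prod_mul_distrib, ← zero_sub, Icc_sub_one_right_eq_Ico]
    refine prod_congr rfl fun j _ => ?_
    rw [hRrev, mul_div_right_comm]
  rw [forward, reversed, Icc_sub_one_right_eq_Ico,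
    ← Ico_union_Ico_eq_Ico ha hb, prod_union (Ico_disjoint_Ico_consecutive a 0 b)]
  ring

theorem embedded_hmm_move_probability_general
    {X : Type*} (n : ℕ)
    (π : (Fin n → X) → ℝ)
    (ρ : Fin n → X → ℝ) (hρ : ∀ t s, 0 < ρ t s)
    (R : Fin n → X → X → ℝ)
    (Rrev : Fin n → X → X → ℝ)
    (hRrev : ∀ t s' s, Rrev t s' s = ρ t s * R t s s' / ρ t s')
    (K : ℤ)
    (J : Fin n → ℤ) (hJ0 : ∀ t, 0 ≤ J t) (hJK : ∀ t, J t ≤ K - 1)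
    -- the candidate pools: `c t j` is the state `x_t^[j]`, with `c t 0` the current state
    (c : Fin n → ℤ → X)
    (x x' : Fin n → X)
    (hc0 : ∀ t, c t 0 = x t)
    -- the normalizing constant over sequences with states in the pools
    (Z : ℝ) :
    π x * (1 / (K : ℝ)) ^ n *
      (∏ t, ((∏ j ∈ Finset.Icc 1 (J t), R t (c t (j - 1)) (c t j)) *
              ∏ j ∈ Finset.Icc (-K + J t + 1) (-1), Rrev t (c t (j + 1)) (c t j))) *
      ((π x' / ∏ t, ρ t (x' t)) / Z)
    = (1 / (K : ℝ)) ^ n * (π x * π x' / ∏ t, (ρ t (x t) * ρ t (x' t))) *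
        (∏ t, (ρ t (c t (-K + J t + 1)) *
               ∏ j ∈ Finset.Icc (-K + J t + 1) (J t - 1), R t (c t j) (c t (j + 1)))) / Z := by
  have pool : ∀ t, (∏ j ∈ Icc 1 (J t), R t (c t (j - 1)) (c t j)) *
        ∏ j ∈ Icc (-K + J t + 1) (-1), Rrev t (c t (j + 1)) (c t j)
      = ρ t (c t (-K + J t + 1)) / ρ t (x t) *
        ∏ j ∈ Icc (-K + J t + 1) (J t - 1), R t (c t j) (c t (j + 1)) := fun t => by
    rw [← hc0 t]
    exact prod_forward_mul_prod_reversal (c t) (R t) (ρ t) (fun s => (hρ t s).ne') (Rrev t)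
      (hRrev t) (by linarith [hJK t]) (hJ0 t)
  have hx_ne : ∏ t, ρ t (x t) ≠ 0 := prod_ne_zero_iff.mpr fun t _ => (hρ t (x t)).ne'
  have hx'_ne : ∏ t, ρ t (x' t) ≠ 0 := prod_ne_zero_iff.mpr fun t _ => (hρ t (x' t)).ne'
  simp only [pool, prod_mul_distrib, prod_div_distrib]
  field_simp

/-- Equation (7) of the paper: the probability of starting at `x` (drawn from `π`),
picking offsets `J t`, generating the given candidate pools `c t` via the kernels `R t`
and their reversals `Rrev t`, and then selecting `x'` with probability proportional to
`π(x')/∏_t ρ_t(x'_t)` among pool sequences, equals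
`(1/K)^n · [π(x)π(x')/∏_t ρ_t(x_t)ρ_t(x'_t)] · ∏_t [ρ_t(x_t^[-K+J_t+1]) ·
∏_{j=-K+J_t+1}^{J_t-1} R_t(x_t^[j+1]|x_t^[j])] / Z`. -/
theorem embedded_hmm_move_probability
    {X : Type*} [Fintype X] (n : ℕ)
    (π : (Fin n → X) → ℝ) (hπ : ∀ s, 0 < π s)
    (ρ : Fin n → X → ℝ) (hρ : ∀ t s, 0 < ρ t s)
    (R : Fin n → X → X → ℝ) (hR : ∀ t s s', 0 ≤ R t s s')
    (hR1 : ∀ t s, ∑ s', R t s s' = 1)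
    (hinv : ∀ t s', ∑ s, ρ t s * R t s s' = ρ t s')
    (Rrev : Fin n → X → X → ℝ)
    (hRrev : ∀ t s' s, Rrev t s' s = ρ t s * R t s s' / ρ t s')
    (K : ℤ) (hK : 1 ≤ K)
    (J : Fin n → ℤ) (hJ0 : ∀ t, 0 ≤ J t) (hJK : ∀ t, J t ≤ K - 1)
    -- the candidate pools: `c t j` is the state `x_t^[j]`, with `c t 0` the current state
    (c : Fin n → ℤ → X)
    (x x' : Fin n → X)
    (hc0 : ∀ t, c t 0 = x t)
    (hx' : ∀ t, ∃ j, -K + J t + 1 ≤ j ∧ j ≤ J t ∧ c t j = x' t)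
    -- the normalizing constant over sequences with states in the pools
    (Z : ℝ)
    (hZ : Z = ∑ h : (t : Fin n) → (Finset.Icc (-K + J t + 1) (J t) : Finset ℤ),
            π (fun t => c t (h t)) / ∏ t, ρ t (c t (h t))) :
    π x * (1 / (K : ℝ)) ^ n *
      (∏ t, ((∏ j ∈ Finset.Icc 1 (J t), R t (c t (j - 1)) (c t j)) *
              ∏ j ∈ Finset.Icc (-K + J t + 1) (-1), Rrev t (c t (j + 1)) (c t j))) *
      ((π x' / ∏ t, ρ t (x' t)) / Z)
    = (1 / (K : ℝ)) ^ n * (π x * π x' / ∏ t, (ρ t (x t) * ρ t (x' t))) *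
        (∏ t, (ρ t (c t (-K + J t + 1)) *
               ∏ j ∈ Finset.Icc (-K + J t + 1) (J t - 1), R t (c t j) (c t (j + 1)))) / Z :=
  embedded_hmm_move_probability_general n π ρ hρ R Rrev hRrev K J hJ0 hJK c x x' hc0 Z
end

section
/- The embedded HMM transition kernel Q satisfies detailed balance with respect to π: for all sequences x, x' in 𝒳^n, π(x)·Q(x'|x) = π(x')·Q(x|x'), where Q(x'|x) is the total probability, summed over all offset choices and pool realizations, of moving from x to x' in one embedded HMM update. -/
open Finset

section EmbeddedHMM

variable {X : Type*} [Fintype X] [DecidableEq X] {n K : ℕ} [NeZero K]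

/-- Look up a pool entry by a natural-number index (indices `0,…,K-1` are used). -/
def poolGet (p : Fin K → X) (i : ℕ) : X := p ⟨i % K, Nat.mod_lt _ (NeZero.pos K)⟩

/-- Probability of generating the pool `p` (indexed `0,…,K-1`, with the current state at
position `i₀ = K-1-J`): states above `i₀` are generated forward using `R` and states
below `i₀` are generated backward using the reversal kernel `Rrev`.
(`R x x'` is the probability of a transition from `x` to `x'`.) -/
def genProb (R Rrev : X → X → ℝ) (i₀ : ℕ) (p : Fin K → X) : ℝ :=
  (∏ i ∈ Finset.Ico (i₀ + 1) K, R (poolGet p (i - 1)) (poolGet p i)) *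
    ∏ i ∈ Finset.range i₀, Rrev (poolGet p (i + 1)) (poolGet p i)

/-- The unnormalized selection weight `π(x)/∏_t ρ_t(x_t)` of the pool sequence picked out
by the index sequence `h`. -/
noncomputable def selWeight (π : (Fin n → X) → ℝ) (ρ : Fin n → X → ℝ)
    (p : Fin n → Fin K → X) (h : Fin n → Fin K) : ℝ :=
  π (fun t => p t (h t)) / ∏ t, ρ t (p t (h t))

/-- The embedded HMM transition kernel: pick each offset `J t` uniformly from
`{0,…,K-1}`, generate pools containing the current state `x t` at position `K-1-J t`,
then select a new sequence among pool sequences with probability proportional to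
`π/∏ ρ_t`.  `ehmmQ (K := K) π ρ R Rrev x x'` is the total probability of moving from `x` to `x'`. -/
noncomputable def ehmmQ (π : (Fin n → X) → ℝ) (ρ : Fin n → X → ℝ)
    (R Rrev : Fin n → X → X → ℝ) (x x' : Fin n → X) : ℝ :=
  ((K : ℝ))⁻¹ ^ n *
    ∑ J : Fin n → Fin K, ∑ p : Fin n → Fin K → X,
      (∏ t, (if poolGet (p t) (K - 1 - (J t : ℕ)) = x t then
               genProb (R t) (Rrev t) (K - 1 - (J t : ℕ)) (p t) else 0)) *
        ((∑ h : Fin n → Fin K,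
            if (∀ t, p t (h t) = x' t) then selWeight π ρ p h else 0) /
          ∑ h : Fin n → Fin K, selWeight π ρ p h)

end EmbeddedHMM

/-!
Write `W(p) = ρ(p₀) ∏ R(pᵢ₋₁, pᵢ)` for the probability of a pool under the stationary chain.
Since `R̃` is the reversal of `R` with respect to `ρ`, the probability of generating a pool around
the current state at position `i`, multiplied by `ρ(pᵢ)`, is `W(p)` whatever `i` is. Hence in
`π(x) Q(x'|x)` the sum over offsets and pools becomes a sum over pool sequences
`p` of `∏ₜ W(pₜ)` times `(π/∏ρ)`-masses of `x` and of `x'` in `p` over the total mass of `p`,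
an expression symmetric in `x` and `x'`.
-/

section EmbeddedHMMBalance

variable {X : Type*} {n K : ℕ} [NeZero K]

lemma poolGet_val (p : Fin K → X) (i : Fin K) : poolGet p i = p i := by
  simp [poolGet, Nat.mod_eq_of_lt i.isLt]

lemma mul_prod_range_reversal {ρ : X → ℝ} {R Rrev : X → X → ℝ}
    (hrev : ∀ s s', ρ s' * Rrev s' s = ρ s * R s s') (a : ℕ → X) (m : ℕ) :
    ρ (a m) * ∏ i ∈ range m, Rrev (a (i + 1)) (a i) =
      ρ (a 0) * ∏ i ∈ range m, R (a i) (a (i + 1)) := by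
  induction m with
  | zero => simp
  | succ m ih =>
    rw [prod_range_succ, prod_range_succ]
    linear_combination (∏ i ∈ range m, Rrev (a (i + 1)) (a i)) * hrev (a m) (a (m + 1)) +
      R (a m) (a (m + 1)) * ih

lemma reversal_of_eq_div {ρ : X → ℝ} {R Rrev : X → X → ℝ} (hρ : ∀ s, 0 < ρ s)
    (hRrev : ∀ s' s, Rrev s' s = ρ s * R s s' / ρ s') (s s' : X) :
    ρ s' * Rrev s' s = ρ s * R s s' := by
  rw [hRrev, mul_div_cancel₀ _ (hρ s').ne']

def poolWeight (ρ : X → ℝ) (R : X → X → ℝ) (p : Fin K → X) : ℝ :=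
  ρ (poolGet p 0) * ∏ i ∈ Ico 1 K, R (poolGet p (i - 1)) (poolGet p i)

lemma mul_genProb_eq_poolWeight {ρ : X → ℝ} {R Rrev : X → X → ℝ}
    (hrev : ∀ s s', ρ s' * Rrev s' s = ρ s * R s s') (p : Fin K → X) {i₀ : ℕ} (hi₀ : i₀ < K) :
    ρ (poolGet p i₀) * genProb R Rrev i₀ p = poolWeight ρ R p := by
  have hfwd : ∏ i ∈ range i₀, R (poolGet p i) (poolGet p (i + 1)) =
      ∏ i ∈ Ico 1 (i₀ + 1), R (poolGet p (i - 1)) (poolGet p i) := by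
    rw [prod_Ico_eq_prod_range]
    simp [Nat.add_comm]
  calc ρ (poolGet p i₀) * genProb R Rrev i₀ p
      = (ρ (poolGet p i₀) * ∏ i ∈ range i₀, Rrev (poolGet p (i + 1)) (poolGet p i)) *
          ∏ i ∈ Ico (i₀ + 1) K, R (poolGet p (i - 1)) (poolGet p i) := by
        rw [genProb]; ring
    _ = ρ (poolGet p 0) * ((∏ i ∈ Ico 1 (i₀ + 1), R (poolGet p (i - 1)) (poolGet p i)) *
          ∏ i ∈ Ico (i₀ + 1) K, R (poolGet p (i - 1)) (poolGet p i)) := by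
        rw [mul_prod_range_reversal hrev, hfwd, mul_assoc]
    _ = poolWeight ρ R p := by
        rw [prod_Ico_consecutive _ (Nat.le_add_left 1 i₀) hi₀, poolWeight]

noncomputable def selMass [DecidableEq X] (π : (Fin n → X) → ℝ) (ρ : Fin n → X → ℝ)
    (p : Fin n → Fin K → X) (x : Fin n → X) : ℝ :=
  ∑ h : Fin n → Fin K, if ∀ t, p t (h t) = x t then selWeight π ρ p h else 0

lemma mul_prod_genProb_eq [DecidableEq X] {π : (Fin n → X) → ℝ} {ρ : Fin n → X → ℝ}
    {R Rrev : Fin n → X → X → ℝ} (hρ : ∀ t s, 0 < ρ t s)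
    (hrev : ∀ t s s', ρ t s' * Rrev t s' s = ρ t s * R t s s')
    (x : Fin n → X) (p : Fin n → Fin K → X) (h : Fin n → Fin K) :
    π x * ∏ t, (if poolGet (p t) (h t) = x t then genProb (R t) (Rrev t) (h t) (p t) else 0) =
      (∏ t, poolWeight (ρ t) (R t) (p t)) *
        if ∀ t, p t (h t) = x t then selWeight π ρ p h else 0 := by
  simp only [poolGet_val]
  by_cases hx : ∀ t, p t (h t) = x t
  · have hW : ∀ t, poolWeight (ρ t) (R t) (p t) =
        ρ t (x t) * genProb (R t) (Rrev t) (h t) (p t) := fun t => by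
      rw [← mul_genProb_eq_poolWeight (hrev t) (p t) (h t).isLt, poolGet_val, hx t]
    have hρx : ∏ t, ρ t (x t) ≠ 0 := (prod_pos fun t _ => hρ t (x t)).ne'
    simp only [hx, if_true, implies_true, hW, prod_mul_distrib, selWeight]
    field_simp
  · obtain ⟨t, ht⟩ := not_forall.mp hx
    rw [if_neg hx, prod_eq_zero (mem_univ t) (if_neg ht), mul_zero, mul_zero]

lemma mul_ehmmQ_eq [Fintype X] [DecidableEq X] {π : (Fin n → X) → ℝ} {ρ : Fin n → X → ℝ}
    {R Rrev : Fin n → X → X → ℝ} (hρ : ∀ t s, 0 < ρ t s)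
    (hrev : ∀ t s s', ρ t s' * Rrev t s' s = ρ t s * R t s s') (x x' : Fin n → X) :
    π x * ehmmQ (K := K) π ρ R Rrev x x' =
      (K : ℝ)⁻¹ ^ n * ∑ p : Fin n → Fin K → X, (∏ t, poolWeight (ρ t) (R t) (p t)) *
        (selMass π ρ p x * selMass π ρ p x' / ∑ h : Fin n → Fin K, selWeight π ρ p h) := by
  have hrevIdx : ∀ j : Fin K, K - 1 - (j : ℕ) = (Fin.rev j : ℕ) := fun j => by
    rw [Fin.val_rev]; omega
  rw [ehmmQ, mul_left_comm, mul_sum]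
  congr 1
  calc ∑ J : Fin n → Fin K, π x * ∑ p : Fin n → Fin K → X,
        (∏ t, if poolGet (p t) (K - 1 - (J t : ℕ)) = x t then
          genProb (R t) (Rrev t) (K - 1 - (J t : ℕ)) (p t) else 0) *
        (selMass π ρ p x' / ∑ h : Fin n → Fin K, selWeight π ρ p h)
      = ∑ h : Fin n → Fin K, ∑ p : Fin n → Fin K → X, (∏ t, poolWeight (ρ t) (R t) (p t)) *
          (if ∀ t, p t (h t) = x t then selWeight π ρ p h else 0) *
          (selMass π ρ p x' / ∑ h : Fin n → Fin K, selWeight π ρ p h) := by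
        refine Fintype.sum_equiv (Equiv.piCongrRight fun _ => Fin.revPerm) _ _ fun J => ?_
        simp only [hrevIdx, mul_sum, ← mul_assoc]
        exact sum_congr rfl fun p _ => by rw [mul_prod_genProb_eq hρ hrev]; rfl
    _ = _ := by
        rw [sum_comm]
        refine sum_congr rfl fun p _ => ?_
        rw [← sum_mul, ← mul_sum]
        unfold selMass
        ring

end EmbeddedHMMBalance

theorem embedded_hmm_detailed_balance_general
    {X : Type*} [Fintype X] [DecidableEq X] {n K : ℕ} [NeZero K]
    (π : (Fin n → X) → ℝ)
    (ρ : Fin n → X → ℝ) (hρ : ∀ t s, 0 < ρ t s)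
    (R : Fin n → X → X → ℝ)
    (Rrev : Fin n → X → X → ℝ)
    (hRrev : ∀ t s' s, Rrev t s' s = ρ t s * R t s s' / ρ t s') :
    ∀ x x' : Fin n → X,
      π x * ehmmQ (K := K) π ρ R Rrev x x' = π x' * ehmmQ (K := K) π ρ R Rrev x' x := by
  intro x x'
  have hrev : ∀ t s s', ρ t s' * Rrev t s' s = ρ t s * R t s s' :=
    fun t => reversal_of_eq_div (hρ t) (hRrev t)
  rw [mul_ehmmQ_eq hρ hrev, mul_ehmmQ_eq hρ hrev]
  simp only [mul_comm (selMass π ρ _ x)]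

/-- The embedded HMM transition kernel satisfies detailed balance with respect to the
target distribution `π` on sequences. -/
theorem embedded_hmm_detailed_balance
    {X : Type*} [Fintype X] [DecidableEq X] {n K : ℕ} [NeZero K]
    (π : (Fin n → X) → ℝ) (hπ : ∀ s, 0 < π s)
    (ρ : Fin n → X → ℝ) (hρ : ∀ t s, 0 < ρ t s)
    (R : Fin n → X → X → ℝ) (hR : ∀ t s s', 0 ≤ R t s s')
    (hR1 : ∀ t s, ∑ s', R t s s' = 1)
    (hinv : ∀ t s', ∑ s, ρ t s * R t s s' = ρ t s')
    (Rrev : Fin n → X → X → ℝ)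
    (hRrev : ∀ t s' s, Rrev t s' s = ρ t s * R t s s' / ρ t s') :
    ∀ x x' : Fin n → X,
      π x * ehmmQ (K := K) π ρ R Rrev x x' = π x' * ehmmQ (K := K) π ρ R Rrev x' x :=
  embedded_hmm_detailed_balance_general π ρ hρ R Rrev hRrev
end

section
/- If for each t = 0,...,n−1 a kernel R_t on a finite space 𝒳 has all entries strictly positive, and π is strictly positive on 𝒳^n, then the embedded HMM kernel Q assigns positive probability to every transition x → x' in 𝒳^n, and hence the embedded HMM Markov chain is ergodic (irreducible and aperiodic). -/
open Finset

section

variable {X : Type*} {n K : ℕ}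

def poolProb [DecidableEq X] [NeZero K] (R Rrev : Fin n → X → X → ℝ) (x : Fin n → X)
    (J : Fin n → Fin K) (p : Fin n → Fin K → X) : ℝ :=
  ∏ t, if poolGet (p t) (K - 1 - (J t : ℕ)) = x t then
    genProb (R t) (Rrev t) (K - 1 - (J t : ℕ)) (p t) else 0

noncomputable def selectProb [DecidableEq X] (π : (Fin n → X) → ℝ) (ρ : Fin n → X → ℝ)
    (p : Fin n → Fin K → X) (x' : Fin n → X) : ℝ :=
  (∑ h : Fin n → Fin K, if ∀ t, p t (h t) = x' t then selWeight π ρ p h else 0) /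
    ∑ h : Fin n → Fin K, selWeight π ρ p h

theorem ehmmQ_eq_sum_poolProb_mul_selectProb [Fintype X] [DecidableEq X] [NeZero K]
    (π : (Fin n → X) → ℝ) (ρ : Fin n → X → ℝ) (R Rrev : Fin n → X → X → ℝ)
    (x x' : Fin n → X) :
    ehmmQ (K := K) π ρ R Rrev x x' =
      ((K : ℝ))⁻¹ ^ n * ∑ J : Fin n → Fin K, ∑ p : Fin n → Fin K → X,
        poolProb R Rrev x J p * selectProb π ρ p x' :=
  rfl

theorem poolGet_of_lt [NeZero K] (p : Fin K → X) {i : ℕ} (hi : i < K) :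
    poolGet p i = p ⟨i, hi⟩ := by
  simp only [poolGet, Nat.mod_eq_of_lt hi]

theorem genProb_pos [NeZero K] {R Rrev : X → X → ℝ} (hR : ∀ s s', 0 < R s s')
    (hRrev : ∀ s' s, 0 < Rrev s' s) (i₀ : ℕ) (p : Fin K → X) :
    0 < genProb R Rrev i₀ p :=
  mul_pos (prod_pos fun _ _ => hR _ _) (prod_pos fun _ _ => hRrev _ _)

theorem selWeight_pos {π : (Fin n → X) → ℝ} {ρ : Fin n → X → ℝ} (hπ : ∀ s, 0 < π s)
    (hρ : ∀ t s, 0 < ρ t s) (p : Fin n → Fin K → X) (h : Fin n → Fin K) :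
    0 < selWeight π ρ p h :=
  div_pos (hπ _) (prod_pos fun t _ => hρ t _)

theorem sum_selWeight_pos [NeZero K] {π : (Fin n → X) → ℝ} {ρ : Fin n → X → ℝ}
    (hπ : ∀ s, 0 < π s) (hρ : ∀ t s, 0 < ρ t s) (p : Fin n → Fin K → X) :
    0 < ∑ h : Fin n → Fin K, selWeight π ρ p h :=
  sum_pos (fun h _ => selWeight_pos hπ hρ p h) univ_nonempty

section

variable [DecidableEq X] [NeZero K] {R Rrev : Fin n → X → X → ℝ}
  (hR : ∀ t s s', 0 < R t s s') (hRrev : ∀ t s' s, 0 < Rrev t s' s)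
include hR hRrev

theorem poolProb_nonneg (x : Fin n → X) (J : Fin n → Fin K) (p : Fin n → Fin K → X) :
    0 ≤ poolProb R Rrev x J p :=
  prod_nonneg fun t _ => by
    split_ifs
    exacts [(genProb_pos (hR t) (hRrev t) _ _).le, le_rfl]

theorem poolProb_pos {x : Fin n → X} {J : Fin n → Fin K} {p : Fin n → Fin K → X}
    (hx : ∀ t, poolGet (p t) (K - 1 - (J t : ℕ)) = x t) :
    0 < poolProb R Rrev x J p :=
  prod_pos fun t _ => by
    rw [if_pos (hx t)]
    exact genProb_pos (hR t) (hRrev t) _ _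

end

section

variable [DecidableEq X] [NeZero K] {π : (Fin n → X) → ℝ} {ρ : Fin n → X → ℝ}
  (hπ : ∀ s, 0 < π s) (hρ : ∀ t s, 0 < ρ t s)
include hπ hρ

theorem selectProb_nonneg (p : Fin n → Fin K → X) (x' : Fin n → X) :
    0 ≤ selectProb π ρ p x' :=
  div_nonneg
    (sum_nonneg fun h _ => by
      split_ifs
      exacts [(selWeight_pos hπ hρ p h).le, le_rfl])
    (sum_selWeight_pos hπ hρ p).le

theorem selectProb_pos {p : Fin n → Fin K → X} {x' : Fin n → X}
    (hx' : ∃ h : Fin n → Fin K, ∀ t, p t (h t) = x' t) :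
    0 < selectProb π ρ p x' := by
  obtain ⟨h₀, hh₀⟩ := hx'
  refine div_pos (sum_pos' (fun h _ => ?_) ⟨h₀, mem_univ _, ?_⟩) (sum_selWeight_pos hπ hρ p)
  · split_ifs
    exacts [(selWeight_pos hπ hρ p h).le, le_rfl]
  · rw [if_pos hh₀]
    exact selWeight_pos hπ hρ p h₀

end

/-- Witness: with all offsets `0` the current state sits at the top position `K - 1` of each
pool; filling the other positions with the target state makes `x'` selectable, and `K ≥ 2`
guarantees that such a position (say `0`) exists. -/
theorem ehmmQ_pos [Fintype X] [DecidableEq X] [NeZero K] (hK : 2 ≤ K)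
    {π : (Fin n → X) → ℝ} (hπ : ∀ s, 0 < π s) {ρ : Fin n → X → ℝ} (hρ : ∀ t s, 0 < ρ t s)
    {R Rrev : Fin n → X → X → ℝ} (hR : ∀ t s s', 0 < R t s s')
    (hRrev : ∀ t s' s, 0 < Rrev t s' s) (x x' : Fin n → X) :
    0 < ehmmQ (K := K) π ρ R Rrev x x' := by
  have hKpos := NeZero.pos K
  let J₀ : Fin n → Fin K := fun _ => ⟨0, hKpos⟩
  let p₀ : Fin n → Fin K → X := fun t i => if (i : ℕ) = K - 1 then x t else x' t
  have hp₀x : ∀ t, poolGet (p₀ t) (K - 1 - (J₀ t : ℕ)) = x t := fun t => by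
    simp [J₀, p₀, poolGet_of_lt (p₀ t) (Nat.sub_lt hKpos one_pos)]
  have hp₀x' : ∀ t, p₀ t ⟨0, hKpos⟩ = x' t := fun t =>
    if_neg fun h => by simp only at h; omega
  have hterm : ∀ (J : Fin n → Fin K) p, 0 ≤ poolProb R Rrev x J p * selectProb π ρ p x' :=
    fun J p => mul_nonneg (poolProb_nonneg hR hRrev x J p) (selectProb_nonneg hπ hρ p x')
  rw [ehmmQ_eq_sum_poolProb_mul_selectProb]
  refine mul_pos (pow_pos (inv_pos.mpr (by exact_mod_cast hKpos)) n) ?_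
  refine sum_pos' (fun J _ => sum_nonneg fun p _ => hterm J p) ⟨J₀, mem_univ _, ?_⟩
  refine sum_pos' (fun p _ => hterm J₀ p) ⟨p₀, mem_univ _, ?_⟩
  exact mul_pos (poolProb_pos hR hRrev hp₀x) (selectProb_pos hπ hρ ⟨J₀, hp₀x'⟩)

end

open Matrix

theorem embedded_hmm_ergodic_general
    {X : Type*} [Fintype X] [DecidableEq X] {n K : ℕ} [NeZero K]
    (hK2 : 2 ≤ K)
    (π : (Fin n → X) → ℝ) (hπ : ∀ s, 0 < π s)
    (ρ : Fin n → X → ℝ) (hρ : ∀ t s, 0 < ρ t s)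
    (R : Fin n → X → X → ℝ) (hRpos : ∀ t s s', 0 < R t s s')
    (Rrev : Fin n → X → X → ℝ)
    (hRrev : ∀ t s' s, Rrev t s' s = ρ t s * R t s s' / ρ t s') :
    (∀ x x' : Fin n → X, 0 < ehmmQ (K := K) π ρ R Rrev x x') ∧
      (∀ x x' : Fin n → X, ∃ m, 1 ≤ m ∧
        0 < ((Matrix.of fun a b : Fin n → X => ehmmQ (K := K) π ρ R Rrev a b) ^ m) x x') ∧
      (∀ x : Fin n → X, ∀ d : ℕ,
        (∀ m, 1 ≤ m →
            0 < ((Matrix.of fun a b : Fin n → X => ehmmQ (K := K) π ρ R Rrev a b) ^ m) x x →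
            d ∣ m) →
        d = 1) := by
  have hRrevpos : ∀ t s' s, 0 < Rrev t s' s := fun t s' s => by
    rw [hRrev]
    exact div_pos (mul_pos (hρ t s) (hRpos t s s')) (hρ t s')
  have hQ := ehmmQ_pos hK2 hπ hρ hRpos hRrevpos
  refine ⟨hQ, fun x x' => ⟨1, le_rfl, by simpa using hQ x x'⟩, fun x d hd => ?_⟩
  exact Nat.dvd_one.mp (hd 1 le_rfl (by simpa using hQ x x))

/-- If every kernel `R t` has all entries strictly positive (and the pool size satisfies
`K ≥ 2`, with `π` strictly positive), then the embedded HMM kernel assigns positive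
probability to every transition, and hence the embedded HMM chain is ergodic:
irreducible and aperiodic. -/
theorem embedded_hmm_ergodic
    {X : Type*} [Fintype X] [DecidableEq X] [Nonempty X] {n K : ℕ} [NeZero K]
    (hK2 : 2 ≤ K)
    (π : (Fin n → X) → ℝ) (hπ : ∀ s, 0 < π s)
    (ρ : Fin n → X → ℝ) (hρ : ∀ t s, 0 < ρ t s)
    (R : Fin n → X → X → ℝ) (hRpos : ∀ t s s', 0 < R t s s')
    (hR1 : ∀ t s, ∑ s', R t s s' = 1)
    (hinv : ∀ t s', ∑ s, ρ t s * R t s s' = ρ t s')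
    (Rrev : Fin n → X → X → ℝ)
    (hRrev : ∀ t s' s, Rrev t s' s = ρ t s * R t s s' / ρ t s') :
    (∀ x x' : Fin n → X, 0 < ehmmQ (K := K) π ρ R Rrev x x') ∧
      (∀ x x' : Fin n → X, ∃ m, 1 ≤ m ∧
        0 < ((Matrix.of fun a b : Fin n → X => ehmmQ (K := K) π ρ R Rrev a b) ^ m) x x') ∧
      (∀ x : Fin n → X, ∀ d : ℕ,
        (∀ m, 1 ≤ m →
            0 < ((Matrix.of fun a b : Fin n → X => ehmmQ (K := K) π ρ R Rrev a b) ^ m) x x →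
            d ∣ m) →
        d = 1) :=
  embedded_hmm_ergodic_general hK2 π hπ ρ hρ R hRpos Rrev hRrev
end
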